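/- Let τ_1 : S_{n_1}(ℂ) → S_{m_1}(ℂ) and τ_2 : S_{n_2}(ℂ) → S_{m_2}(ℂ) be quantum channels and let τ_1 ⊗ τ_2 : S_{n_1 n_2}(ℂ) → S_{m_1 m_2}(ℂ) be their tensor product channel. Then σ_1(τ_1 ⊗ τ_2) = σ_1(τ_1) · σ_1(τ_2); equivalently, log‖τ_1 ⊗ τ_2‖ = log‖τ_1‖ + log‖τ_2‖. -/

import Mathlib

open scoped ComplexOrder
open Matrix Kronecker

/-- Frobenius norm of a complex matrix: `√(tr (X Xᴴ))`. -/
noncomputable def frobNorm {n m : Type*} [Fintype n] [Fintype m]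
    (X : Matrix n m ℂ) : ℝ :=
  Real.sqrt ((X * Xᴴ).trace.re)

/-- Operator norm `σ₁(τ) = ‖τ‖` of a map between spaces of Hermitian matrices,
with respect to the Frobenius norm. -/
noncomputable def opNorm {n m : Type*} [Fintype n] [Fintype m]
    (τ : Matrix n n ℂ → Matrix m m ℂ) : ℝ :=
  sSup {c : ℝ | ∃ X : Matrix n n ℂ, X.IsHermitian ∧ frobNorm X ≤ 1 ∧ c = frobNorm (τ X)}

/-- The second singular value of a map between spaces of Hermitian matrices, via the
Courant–Fischer min-max characterization: the infimum over nonzero Hermitian `U` of the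
norm of `τ` restricted to the orthogonal complement of `U`. -/
noncomputable def sigma2 {n m : Type*} [Fintype n] [Fintype m]
    (τ : Matrix n n ℂ → Matrix m m ℂ) : ℝ :=
  sInf {c : ℝ | ∃ U : Matrix n n ℂ, U.IsHermitian ∧ U ≠ 0 ∧
    c = sSup {d : ℝ | ∃ X : Matrix n n ℂ, X.IsHermitian ∧ frobNorm X ≤ 1 ∧
      (U * X).trace.re = 0 ∧ d = frobNorm (τ X)}}

/-- Largest eigenvalue `λ₁` of a Hermitian matrix (junk value `0` otherwise). -/
noncomputable def lambdaMax {n : Type*} [Fintype n] [DecidableEq n]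
    (Y : Matrix n n ℂ) : ℝ :=
  if hY : Y.IsHermitian then ⨆ i, hY.eigenvalues i else 0

/-- von Neumann entropy `H(Y) = -∑ λᵢ log λᵢ` of a Hermitian matrix
(junk value `0` otherwise); note `Real.log 0 = 0`. -/
noncomputable def entropy {n : Type*} [Fintype n] [DecidableEq n]
    (Y : Matrix n n ℂ) : ℝ :=
  if hY : Y.IsHermitian then -∑ i, hY.eigenvalues i * Real.log (hY.eigenvalues i) else 0

/-- Minimum output entropy of a channel: the infimum of `H(τ X)` over density matrices `X`. -/
noncomputable def minEntropy {n m : Type*} [Fintype n] [DecidableEq n] [Fintype m] [DecidableEq m]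
    (τ : Matrix n n ℂ → Matrix m m ℂ) : ℝ :=
  sInf {h : ℝ | ∃ X : Matrix n n ℂ, X.PosSemidef ∧ X.trace = 1 ∧ h = entropy (τ X)}

/-- Eigenvalues of a Hermitian matrix arranged in decreasing order:
`eigsDesc Y 0 = λ₁ ≥ eigsDesc Y 1 = λ₂ ≥ …` (junk value `0` if not Hermitian). -/
noncomputable def eigsDesc {n : ℕ} (Y : Matrix (Fin n) (Fin n) ℂ) : Fin n → ℝ :=
  if hY : Y.IsHermitian then fun i => hY.eigenvalues (Tuple.sort hY.eigenvalues i.rev)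
  else fun _ => 0

/-- The sum `λ₁ + ⋯ + λ_k` of the `k` largest eigenvalues of a Hermitian matrix. -/
noncomputable def sumTopEigs {n : ℕ} (k : ℕ) (Y : Matrix (Fin n) (Fin n) ℂ) : ℝ :=
  ∑ i : Fin n, if (i : ℕ) < k then eigsDesc Y i else 0


/-!
Kraus maps preserve Hermiticity, so the bound `‖τ X‖ ≤ σ₁(τ) ‖X‖`, which `σ₁` only asserts for
Hermitian `X`, extends to every complex `X = H + i K` because `‖H + i K‖² = ‖H‖² + ‖K‖²`.
Product inputs `X₁ ⊗ X₂` give `σ₁(τ₁) σ₁(τ₂) ≤ σ₁(τ₁ ⊗ τ₂)`. Conversely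
`τ₁ ⊗ τ₂ = (τ₁ ⊗ id) ∘ (id ⊗ τ₂)`, and `id ⊗ τ` applies `τ` to each block of its argument;
since squared Frobenius norms add over blocks (which need not be Hermitian, hence the extension
above), `‖id ⊗ τ‖ ≤ σ₁(τ)`, and likewise for `τ ⊗ id`.
-/

attribute [local instance] Matrix.frobeniusSeminormedAddCommGroup
  Matrix.frobeniusNormedAddCommGroup Matrix.frobeniusNormedSpace

open ComplexStarModule

section FrobeniusNorm

variable {l m n p q : Type*} [Fintype l] [Fintype m] [Fintype n] [Fintype p] [Fintype q]

lemma frobenius_norm_sq_eq_sum (X : Matrix m n ℂ) : ‖X‖ ^ 2 = ∑ i, ∑ j, ‖X i j‖ ^ 2 := by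
  rw [frobenius_norm_def, ← Real.sqrt_eq_rpow, Real.sq_sqrt (by positivity)]
  simp_rw [Real.rpow_two]

lemma re_trace_mul_conjTranspose (X : Matrix m n ℂ) : (X * Xᴴ).trace.re = ‖X‖ ^ 2 := by
  simp [frobenius_norm_sq_eq_sum, Matrix.trace, Matrix.mul_apply, Complex.re_sum,
    Complex.mul_conj', ← Complex.ofReal_pow]

lemma frobNorm_eq_norm (X : Matrix m n ℂ) : frobNorm X = ‖X‖ := by
  rw [frobNorm, re_trace_mul_conjTranspose, Real.sqrt_sq (norm_nonneg X)]

lemma frobenius_norm_kronecker (X : Matrix m n ℂ) (Y : Matrix p q ℂ) :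
    ‖X ⊗ₖ Y‖ = ‖X‖ * ‖Y‖ := by
  rw [← sq_eq_sq₀ (norm_nonneg _) (by positivity), mul_pow]
  simp only [frobenius_norm_sq_eq_sum, Fintype.sum_prod_type, kronecker_apply, norm_mul, mul_pow,
    Finset.sum_mul_sum]

lemma frobenius_norm_submatrix_equiv (X : Matrix m n ℂ) (e : l ≃ m) (f : p ≃ n) :
    ‖X.submatrix e f‖ = ‖X‖ := by
  rw [← sq_eq_sq₀ (norm_nonneg _) (norm_nonneg _), frobenius_norm_sq_eq_sum,
    frobenius_norm_sq_eq_sum]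
  simp only [submatrix_apply]
  rw [← e.sum_comp]
  simp_rw [← f.sum_comp]

lemma frobenius_norm_sq_eq_sum_submatrix (Z : Matrix (q × m) (q × n) ℂ) :
    ‖Z‖ ^ 2 = ∑ a, ∑ b, ‖Z.submatrix (Prod.mk a) (Prod.mk b)‖ ^ 2 := by
  simp only [frobenius_norm_sq_eq_sum, Fintype.sum_prod_type, submatrix_apply]
  exact Finset.sum_congr rfl fun _ _ => Finset.sum_comm

-- The cross terms `i tr(K H) - i tr(H K)` cancel.
lemma frobenius_norm_sq_add_I_smul {H K : Matrix n n ℂ} (hH : H.IsHermitian)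
    (hK : K.IsHermitian) :
    ‖H + Complex.I • K‖ ^ 2 = ‖H‖ ^ 2 + ‖K‖ ^ 2 := by
  simp only [← re_trace_mul_conjTranspose, conjTranspose_add, conjTranspose_smul, hH.eq, hK.eq,
    Matrix.add_mul, Matrix.mul_add, Matrix.smul_mul, Matrix.mul_smul, trace_add, trace_smul]
  rw [trace_mul_comm K H]
  simp [Complex.conj_I]

end FrobeniusNorm

lemma Matrix.IsHermitian.kronecker {n q : Type*} {X : Matrix n n ℂ} {Y : Matrix q q ℂ}
    (hX : X.IsHermitian) (hY : Y.IsHermitian) : (X ⊗ₖ Y).IsHermitian := by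
  rw [IsHermitian, conjTranspose_kronecker, hX.eq, hY.eq]

section OpNorm

variable {m n : Type*} [Fintype m] [Fintype n]

lemma opNorm_nonneg (τ : Matrix n n ℂ → Matrix m m ℂ) : 0 ≤ opNorm τ :=
  Real.sSup_nonneg <| by rintro _ ⟨X, -, -, rfl⟩; exact Real.sqrt_nonneg _

lemma opNorm_le {τ : Matrix n n ℂ → Matrix m m ℂ} {c : ℝ} (hc : 0 ≤ c)
    (h : ∀ X : Matrix n n ℂ, X.IsHermitian → ‖X‖ ≤ 1 → ‖τ X‖ ≤ c) : opNorm τ ≤ c := by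
  refine Real.sSup_le ?_ hc
  rintro _ ⟨X, hX, hX1, rfl⟩
  rw [frobNorm_eq_norm] at hX1 ⊢
  exact h X hX hX1

lemma exists_lt_norm_apply_of_lt_opNorm {τ : Matrix n n ℂ → Matrix m m ℂ} {a : ℝ}
    (ha : a < opNorm τ) : ∃ X : Matrix n n ℂ, X.IsHermitian ∧ ‖X‖ ≤ 1 ∧ a < ‖τ X‖ := by
  obtain ⟨_, ⟨X, hX, hX1, rfl⟩, haX⟩ :=
    exists_lt_of_lt_csSup (by exact ⟨_, 0, isHermitian_zero, by simp [frobNorm_eq_norm], rfl⟩) ha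
  exact ⟨X, hX, by rwa [← frobNorm_eq_norm], by rwa [← frobNorm_eq_norm]⟩

lemma opNorm_mul_opNorm_le {p q : Type*} [Fintype p] [Fintype q]
    {τ₁ : Matrix n n ℂ → Matrix m m ℂ} {τ₂ : Matrix p p ℂ → Matrix q q ℂ} {c : ℝ} (hc : 0 ≤ c)
    (h : ∀ X₁ X₂, X₁.IsHermitian → ‖X₁‖ ≤ 1 → X₂.IsHermitian → ‖X₂‖ ≤ 1 →
      ‖τ₁ X₁‖ * ‖τ₂ X₂‖ ≤ c) :
    opNorm τ₁ * opNorm τ₂ ≤ c := by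
  refine mul_le_of_forall_lt_of_nonneg (opNorm_nonneg τ₁) hc fun a₁ ha₁ ha₁τ a₂ ha₂ ha₂τ => ?_
  obtain ⟨X₁, hX₁, hX₁1, ha₁X⟩ := exists_lt_norm_apply_of_lt_opNorm ha₁τ
  obtain ⟨X₂, hX₂, hX₂1, ha₂X⟩ := exists_lt_norm_apply_of_lt_opNorm ha₂τ
  calc a₁ * a₂ ≤ ‖τ₁ X₁‖ * ‖τ₂ X₂‖ := by gcongr
    _ ≤ c := h X₁ X₂ hX₁ hX₁1 hX₂ hX₂1

lemma norm_apply_le_opNorm (τ : Matrix n n ℂ →ₗ[ℝ] Matrix m m ℂ) {X : Matrix n n ℂ}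
    (hX : X.IsHermitian) (hX1 : ‖X‖ ≤ 1) : ‖τ X‖ ≤ opNorm τ := by
  obtain ⟨C, hC, hτC⟩ :=
    SemilinearMapClass.bound_of_continuous τ (LinearMap.continuous_of_finiteDimensional τ)
  refine le_csSup ⟨C, ?_⟩ ⟨X, hX, by rwa [frobNorm_eq_norm], (frobNorm_eq_norm _).symm⟩
  rintro _ ⟨Y, -, hY1, rfl⟩
  rw [frobNorm_eq_norm] at hY1 ⊢
  calc ‖τ Y‖ ≤ C * ‖Y‖ := hτC Y
    _ ≤ C := mul_le_of_le_one_right hC.le hY1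

lemma norm_apply_le_opNorm_mul_of_isHermitian (τ : Matrix n n ℂ →ₗ[ℝ] Matrix m m ℂ)
    {X : Matrix n n ℂ} (hX : X.IsHermitian) : ‖τ X‖ ≤ opNorm τ * ‖X‖ := by
  obtain hX0 | hX0 := (norm_nonneg X).eq_or_lt
  · simp [norm_eq_zero.mp hX0.symm]
  have hXn : ‖‖X‖⁻¹ • X‖ ≤ 1 := by
    rw [norm_smul, norm_inv, norm_norm, inv_mul_cancel₀ hX0.ne']
  have := norm_apply_le_opNorm τ (hX.smul (IsSelfAdjoint.all ‖X‖⁻¹)) hXn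
  rwa [map_smul, norm_smul, norm_inv, norm_norm, inv_mul_le_iff₀ hX0, mul_comm] at this

lemma norm_apply_le_opNorm_mul (τ : Matrix n n ℂ →ₗ[ℂ] Matrix m m ℂ)
    (hτ : ∀ X, X.IsHermitian → (τ X).IsHermitian) (X : Matrix n n ℂ) :
    ‖τ X‖ ≤ opNorm τ * ‖X‖ := by
  obtain ⟨H, K, hH, hK, rfl⟩ : ∃ H K : Matrix n n ℂ, H.IsHermitian ∧ K.IsHermitian ∧
      X = H + Complex.I • K :=
    ⟨ℜ X, ℑ X, (ℜ X).2, (ℑ X).2, (realPart_add_I_smul_imaginaryPart X).symm⟩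
  rw [← sq_le_sq₀ (norm_nonneg _) (mul_nonneg (opNorm_nonneg _) (norm_nonneg _)), mul_pow,
    map_add, map_smul, frobenius_norm_sq_add_I_smul (hτ H hH) (hτ K hK),
    frobenius_norm_sq_add_I_smul hH hK, mul_add, ← mul_pow, ← mul_pow]
  gcongr
  · exact norm_apply_le_opNorm_mul_of_isHermitian (τ.restrictScalars ℝ) hH
  · exact norm_apply_le_opNorm_mul_of_isHermitian (τ.restrictScalars ℝ) hK

end OpNorm

section KrausMap

variable {m n p q ι κ : Type*} [Fintype n] [Fintype q] [Fintype ι] [Fintype κ]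

@[simps]
def krausMap (C : ι → Matrix m n ℂ) : Matrix n n ℂ →ₗ[ℂ] Matrix m m ℂ where
  toFun X := ∑ i, C i * X * (C i)ᴴ
  map_add' X Y := by simp [Matrix.mul_add, Matrix.add_mul, Finset.sum_add_distrib]
  map_smul' c X := by simp [Finset.smul_sum]

lemma isHermitian_krausMap (C : ι → Matrix m n ℂ) {X : Matrix n n ℂ} (hX : X.IsHermitian) :
    (krausMap C X).IsHermitian :=
  isSelfAdjoint_sum _ fun i _ => isHermitian_mul_mul_conjTranspose (C i) hX

lemma krausMap_kronecker (A : ι → Matrix m n ℂ) (B : κ → Matrix p q ℂ) (X : Matrix n n ℂ)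
    (Y : Matrix q q ℂ) :
    krausMap (fun i : ι × κ => A i.1 ⊗ₖ B i.2) (X ⊗ₖ Y) = krausMap A X ⊗ₖ krausMap B Y := by
  ext ⟨x, u⟩ ⟨y, v⟩
  simp [conjTranspose_kronecker, ← mul_kronecker_mul, Fintype.sum_prod_type, Matrix.sum_apply,
    Finset.sum_mul_sum]

lemma krausMap_kronecker_eq_comp [Fintype p] [DecidableEq n] [DecidableEq p]
    (A : ι → Matrix m n ℂ) (B : κ → Matrix p q ℂ) :
    krausMap (fun i : ι × κ => A i.1 ⊗ₖ B i.2) =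
      krausMap (fun i => A i ⊗ₖ (1 : Matrix p p ℂ)) ∘ₗ
        krausMap (fun j => (1 : Matrix n n ℂ) ⊗ₖ B j) := by
  ext1 X
  simp only [krausMap_apply, LinearMap.comp_apply, Fintype.sum_prod_type, Matrix.mul_sum,
    Matrix.sum_mul]
  refine Finset.sum_congr rfl fun i _ => Finset.sum_congr rfl fun j _ => ?_
  have hAB : A i ⊗ₖ B j = (A i ⊗ₖ (1 : Matrix p p ℂ)) * ((1 : Matrix n n ℂ) ⊗ₖ B j) := by
    rw [← mul_kronecker_mul, Matrix.mul_one, Matrix.one_mul]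
  simp only [hAB, conjTranspose_mul, Matrix.mul_assoc]

lemma submatrix_krausMap_one_kronecker [DecidableEq q] (C : ι → Matrix m n ℂ)
    (Z : Matrix (q × n) (q × n) ℂ) (a b : q) :
    (krausMap (fun i => (1 : Matrix q q ℂ) ⊗ₖ C i) Z).submatrix (Prod.mk a) (Prod.mk b) =
      krausMap C (Z.submatrix (Prod.mk a) (Prod.mk b)) := by
  ext x y
  simp [Matrix.sum_apply, Matrix.mul_apply, Fintype.sum_prod_type, one_apply,
    apply_ite (starRingEnd ℂ)]

lemma krausMap_kronecker_one [DecidableEq q] (C : ι → Matrix m n ℂ)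
    (Z : Matrix (n × q) (n × q) ℂ) :
    krausMap (fun i => C i ⊗ₖ (1 : Matrix q q ℂ)) Z =
      (krausMap (fun i => (1 : Matrix q q ℂ) ⊗ₖ C i)
        (Z.submatrix (Equiv.prodComm q n) (Equiv.prodComm q n))).submatrix
          (Equiv.prodComm m q) (Equiv.prodComm m q) := by
  ext ⟨x, a⟩ ⟨y, b⟩
  simp [Matrix.sum_apply, Matrix.mul_apply, Fintype.sum_prod_type, one_apply,
    apply_ite (starRingEnd ℂ)]

variable [Fintype m]

lemma norm_krausMap_one_kronecker_le [DecidableEq q] (C : ι → Matrix m n ℂ)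
    (Z : Matrix (q × n) (q × n) ℂ) :
    ‖krausMap (fun i => (1 : Matrix q q ℂ) ⊗ₖ C i) Z‖ ≤ opNorm (krausMap C) * ‖Z‖ := by
  rw [← sq_le_sq₀ (norm_nonneg _) (mul_nonneg (opNorm_nonneg _) (norm_nonneg _)), mul_pow,
    frobenius_norm_sq_eq_sum_submatrix, frobenius_norm_sq_eq_sum_submatrix Z, Finset.mul_sum]
  refine Finset.sum_le_sum fun a _ => ?_
  rw [Finset.mul_sum]
  refine Finset.sum_le_sum fun b _ => ?_
  rw [submatrix_krausMap_one_kronecker, ← mul_pow]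
  gcongr
  exact norm_apply_le_opNorm_mul _ (fun _ => isHermitian_krausMap C) _

lemma norm_krausMap_kronecker_one_le [DecidableEq q] (C : ι → Matrix m n ℂ)
    (Z : Matrix (n × q) (n × q) ℂ) :
    ‖krausMap (fun i => C i ⊗ₖ (1 : Matrix q q ℂ)) Z‖ ≤ opNorm (krausMap C) * ‖Z‖ := by
  rw [krausMap_kronecker_one, frobenius_norm_submatrix_equiv,
    ← frobenius_norm_submatrix_equiv Z (Equiv.prodComm q n) (Equiv.prodComm q n)]
  exact norm_krausMap_one_kronecker_le C _

variable [Fintype p]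

lemma opNorm_krausMap_kronecker_le (A : ι → Matrix m n ℂ) (B : κ → Matrix p q ℂ) :
    opNorm (krausMap fun i : ι × κ => A i.1 ⊗ₖ B i.2) ≤
      opNorm (krausMap A) * opNorm (krausMap B) := by
  classical
  refine opNorm_le (mul_nonneg (opNorm_nonneg _) (opNorm_nonneg _)) fun X _ hX1 => ?_
  rw [krausMap_kronecker_eq_comp, LinearMap.comp_apply]
  calc _ ≤ opNorm (krausMap A) * ‖krausMap (fun j => (1 : Matrix n n ℂ) ⊗ₖ B j) X‖ :=
        norm_krausMap_kronecker_one_le A _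
    _ ≤ opNorm (krausMap A) * (opNorm (krausMap B) * ‖X‖) := by
        gcongr
        · exact opNorm_nonneg _
        · exact norm_krausMap_one_kronecker_le B X
    _ ≤ opNorm (krausMap A) * opNorm (krausMap B) := by
        rw [← mul_assoc]
        exact mul_le_of_le_one_right (mul_nonneg (opNorm_nonneg _) (opNorm_nonneg _)) hX1

lemma opNorm_mul_opNorm_le_opNorm_krausMap_kronecker (A : ι → Matrix m n ℂ)
    (B : κ → Matrix p q ℂ) :
    opNorm (krausMap A) * opNorm (krausMap B) ≤
      opNorm (krausMap fun i : ι × κ => A i.1 ⊗ₖ B i.2) := by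
  refine opNorm_mul_opNorm_le (opNorm_nonneg _) fun X₁ X₂ hX₁ hX₁1 hX₂ hX₂1 => ?_
  rw [← frobenius_norm_kronecker, ← krausMap_kronecker]
  refine norm_apply_le_opNorm (LinearMap.restrictScalars ℝ (krausMap _)) (hX₁.kronecker hX₂) ?_
  rw [frobenius_norm_kronecker]
  exact mul_le_one₀ hX₁1 (norm_nonneg _) hX₂1

theorem opNorm_krausMap_kronecker (A : ι → Matrix m n ℂ) (B : κ → Matrix p q ℂ) :
    opNorm (krausMap fun i : ι × κ => A i.1 ⊗ₖ B i.2) =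
      opNorm (krausMap A) * opNorm (krausMap B) :=
  (opNorm_krausMap_kronecker_le A B).antisymm (opNorm_mul_opNorm_le_opNorm_krausMap_kronecker A B)

end KrausMap

theorem stmt_7_general {n₁ m₁ n₂ m₂ l₁ l₂ : ℕ}
    (A₁ : Fin l₁ → Matrix (Fin m₁) (Fin n₁) ℂ)
    (A₂ : Fin l₂ → Matrix (Fin m₂) (Fin n₂) ℂ) :
    opNorm (fun X : Matrix (Fin n₁ × Fin n₂) (Fin n₁ × Fin n₂) ℂ =>
        ∑ i : Fin l₁ × Fin l₂, (A₁ i.1 ⊗ₖ A₂ i.2) * X * (A₁ i.1 ⊗ₖ A₂ i.2)ᴴ) =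
      opNorm (fun X : Matrix (Fin n₁) (Fin n₁) ℂ => ∑ i, A₁ i * X * (A₁ i)ᴴ) *
        opNorm (fun X : Matrix (Fin n₂) (Fin n₂) ℂ => ∑ i, A₂ i * X * (A₂ i)ᴴ) :=
  opNorm_krausMap_kronecker A₁ A₂

/-- For quantum channels τ₁, τ₂, the operator norm is multiplicative
under tensor products: σ₁(τ₁ ⊗ τ₂) = σ₁(τ₁) · σ₁(τ₂). -/
theorem stmt_7 {n₁ m₁ n₂ m₂ l₁ l₂ : ℕ}
    (A₁ : Fin l₁ → Matrix (Fin m₁) (Fin n₁) ℂ)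
    (A₂ : Fin l₂ → Matrix (Fin m₂) (Fin n₂) ℂ)
    (hA₁ : ∑ i, (A₁ i)ᴴ * A₁ i = 1) (hA₂ : ∑ i, (A₂ i)ᴴ * A₂ i = 1) :
    opNorm (fun X : Matrix (Fin n₁ × Fin n₂) (Fin n₁ × Fin n₂) ℂ =>
        ∑ i : Fin l₁ × Fin l₂, (A₁ i.1 ⊗ₖ A₂ i.2) * X * (A₁ i.1 ⊗ₖ A₂ i.2)ᴴ) =
      opNorm (fun X : Matrix (Fin n₁) (Fin n₁) ℂ => ∑ i, A₁ i * X * (A₁ i)ᴴ) *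
        opNorm (fun X : Matrix (Fin n₂) (Fin n₂) ℂ => ∑ i, A₂ i * X * (A₂ i)ᴴ) :=
  stmt_7_general A₁ A₂
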